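/- If L ∈ 𝒟 has ord(L) > 0 and A, B ∈ 𝒟 both commute with L, then [A,B] = 0. In particular, the centralizer 𝒞(L) is a commutative subalgebra of 𝒟, and every maximal commutative subalgebra of 𝒟 is the centralizer of each of its elements of positive order. -/

import Mathlib

open scoped BigOperators

/-- The operator of left multiplication by `a ∈ K`, viewed in `Module.End ℂ K`. -/
noncomputable def mulOp (K : Type*) [CommRing K] [Algebra ℂ K] (a : K) :
    Module.End ℂ K := LinearMap.mulLeft ℂ a

/-- The differential operator `Σ_{i=0}^{n} a_i ∂^i` (with `∂ = δ`). -/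
noncomputable def diffOp {K : Type*} [CommRing K] [Algebra ℂ K] (δ : Module.End ℂ K)
    (a : ℕ → K) (n : ℕ) : Module.End ℂ K :=
  ∑ i ∈ Finset.range (n + 1), mulOp K (a i) * δ ^ i

/-- Membership in the ring `𝒟 = K[∂]` of differential operators. -/
def IsDiffOp {K : Type*} [CommRing K] [Algebra ℂ K] (δ : Module.End ℂ K)
    (P : Module.End ℂ K) : Prop :=
  ∃ (a : ℕ → K) (k : ℕ), P = diffOp δ a k

/-- `P` is a differential operator of (exact) positive order. -/
def HasPosOrd {K : Type*} [CommRing K] [Algebra ℂ K] (δ : Module.End ℂ K)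
    (P : Module.End ℂ K) : Prop :=
  ∃ (a : ℕ → K) (k : ℕ), 0 < k ∧ a k ≠ 0 ∧ P = diffOp δ a k

set_option linter.unusedSectionVars false

section Basic
variable {K : Type*} [Field K] [Algebra ℂ K]

@[simp] lemma mulOp_apply (a x : K) : mulOp K a x = a * x := rfl
lemma mulOp_mul (a b : K) : mulOp K a * mulOp K b = mulOp K (a * b) := by
  ext x; simp [mulOp_apply, mul_assoc]
lemma mulOp_add (a b : K) : mulOp K (a + b) = mulOp K a + mulOp K b := by
  ext x; simp [add_mul]

lemma mulOp_neg (a : K) : mulOp K (-a) = - mulOp K a := by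
  ext x; simp
@[simp] lemma mulOp_zero : mulOp K (0 : K) = 0 := by ext x; simp
@[simp] lemma mulOp_one : mulOp K (1 : K) = 1 := by ext x; simp

lemma algebraMap_end_eq (γ : ℂ) :
    algebraMap ℂ (Module.End ℂ K) γ = mulOp K (algebraMap ℂ K γ) := by
  ext x
  simp [Module.algebraMap_end_apply, Algebra.smul_def]

variable (δ : Module.End ℂ K)

lemma diffOp_congr {a b : ℕ → K} {k : ℕ} (h : ∀ i ≤ k, a i = b i) :
    diffOp δ a k = diffOp δ b k := by
  unfold diffOp
  exact Finset.sum_congr rfl (fun i hi => by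
    rw [h i (Nat.lt_succ_iff.mp (Finset.mem_range.mp hi))])

lemma diffOp_pad {a : ℕ → K} {k k' : ℕ} (hkk : k ≤ k')
    (h : ∀ i, k < i → i ≤ k' → a i = 0) :
    diffOp δ a k' = diffOp δ a k := by
  unfold diffOp
  refine (Finset.sum_subset ?_ ?_).symm
  · exact Finset.range_subset_range.mpr (by omega)
  · intro i hi hni
    rw [Finset.mem_range] at hi
    rw [Finset.mem_range, not_lt] at hni
    rw [h i (by omega) (by omega), mulOp_zero, zero_mul]

lemma diffOp_add (a b : ℕ → K) (k : ℕ) :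
    diffOp δ a k + diffOp δ b k = diffOp δ (fun i => a i + b i) k := by
  unfold diffOp
  rw [← Finset.sum_add_distrib]
  exact Finset.sum_congr rfl (fun i _ => by rw [mulOp_add, add_mul])

lemma diffOp_zero_coeff (k : ℕ) : diffOp δ (fun _ => (0:K)) k = 0 := by
  unfold diffOp; simp

lemma diffOp_neg (a : ℕ → K) (k : ℕ) :
    - diffOp δ a k = diffOp δ (fun j => - a j) k := by
  unfold diffOp
  rw [← Finset.sum_neg_distrib]
  exact Finset.sum_congr rfl (fun j _ => by rw [mulOp_neg]; exact (neg_mul (α := Module.End ℂ K) _ _).symm)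

lemma diffOp_sub (a b : ℕ → K) (k : ℕ) :
    diffOp δ a k - diffOp δ b k = diffOp δ (fun j => a j - b j) k := by
  rw [sub_eq_add_neg, diffOp_neg, diffOp_add]
  exact diffOp_congr δ (fun i _ => (sub_eq_add_neg (a i) (b i)).symm)

lemma mulOp_diffOp (e : K) (b : ℕ → K) (l : ℕ) :
    mulOp K e * diffOp δ b l = diffOp δ (fun j => e * b j) l := by
  unfold diffOp
  rw [Finset.mul_sum]
  exact Finset.sum_congr rfl (fun i _ => by rw [← mul_assoc, mulOp_mul])

lemma diffOp_zero_deg (a : ℕ → K) : diffOp δ a 0 = mulOp K (a 0) := by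
  unfold diffOp; simp

lemma diffOp_succ (a : ℕ → K) (k : ℕ) :
    diffOp δ a (k + 1) = diffOp δ a k + mulOp K (a (k + 1)) * δ ^ (k + 1) := by
  unfold diffOp
  rw [Finset.sum_range_succ]

lemma monomial_eq_diffOp (e : K) (k : ℕ) :
    mulOp K e * δ ^ k = diffOp δ (fun j => if j = k then e else 0) k := by
  unfold diffOp
  rw [Finset.sum_eq_single k]
  · simp
  · intro i _ hik; simp [hik]
  · intro h; exact absurd (Finset.self_mem_range_succ k) h

end Basic

section Leib
variable {K : Type*} [Field K] [Algebra ℂ K]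
variable {δ : Module.End ℂ K}
variable (hLb : ∀ a b : K, δ (a * b) = a * δ b + δ a * b)

include hLb

lemma delta_mulOp (a : K) : δ * mulOp K a = mulOp K a * δ + mulOp K (δ a) := by
  ext x
  simp only [Module.End.mul_apply, LinearMap.add_apply, mulOp_apply]
  rw [hLb a x]

/-- coefficients of `δ * diffOp δ b l` -/
noncomputable def shiftCoef (δ : Module.End ℂ K) (b : ℕ → K) (l : ℕ) : ℕ → K :=
  fun j => (if j ≤ l then δ (b j) else 0) + (if 1 ≤ j ∧ j - 1 ≤ l then b (j - 1) else 0)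

lemma delta_diffOp (b : ℕ → K) (l : ℕ) :
    δ * diffOp δ b l = diffOp δ (shiftCoef δ b l) (l + 1) := by
  have expand : ∀ j, δ * (mulOp K (b j) * δ ^ j)
      = mulOp K (δ (b j)) * δ ^ j + mulOp K (b j) * δ ^ (j + 1) := by
    intro j
    rw [← mul_assoc, delta_mulOp hLb, add_mul, pow_succ', ← mul_assoc, add_comm]
  unfold diffOp
  rw [Finset.mul_sum]
  have lhs : ∑ j ∈ Finset.range (l + 1), δ * (mulOp K (b j) * δ ^ j)
      = (∑ j ∈ Finset.range (l + 1), mulOp K (δ (b j)) * δ ^ j)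
        + ∑ j ∈ Finset.range (l + 1), mulOp K (b j) * δ ^ (j + 1) := by
    rw [← Finset.sum_add_distrib]
    exact Finset.sum_congr rfl (fun j _ => expand j)
  rw [lhs]
  have rhs : ∑ i ∈ Finset.range (l + 1 + 1), mulOp K (shiftCoef δ b l i) * δ ^ i
      = (∑ i ∈ Finset.range (l + 1 + 1), mulOp K (if i ≤ l then δ (b i) else 0) * δ ^ i)
        + ∑ i ∈ Finset.range (l + 1 + 1),
            mulOp K (if 1 ≤ i ∧ i - 1 ≤ l then b (i - 1) else 0) * δ ^ i := by
    rw [← Finset.sum_add_distrib]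
    exact Finset.sum_congr rfl (fun i _ => by rw [shiftCoef, mulOp_add, add_mul])
  rw [rhs]
  congr 1
  · have hss : (∑ i ∈ Finset.range (l + 1), mulOp K (if i ≤ l then δ (b i) else 0) * δ ^ i)
        = ∑ i ∈ Finset.range (l + 1 + 1), mulOp K (if i ≤ l then δ (b i) else 0) * δ ^ i := by
      refine Finset.sum_subset (Finset.range_subset_range.mpr (by omega)) ?_
      intro i hi hni
      rw [Finset.mem_range] at hi
      rw [Finset.mem_range, not_lt] at hni
      rw [if_neg (by omega), mulOp_zero, zero_mul]
    rw [← hss]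
    exact Finset.sum_congr rfl (fun i hi => by
      rw [Finset.mem_range] at hi
      rw [if_pos (by omega)])
  · symm
    rw [Finset.sum_range_succ']
    have h0 : mulOp K (if 1 ≤ 0 ∧ 0 - 1 ≤ l then b (0 - 1) else 0) * δ ^ 0 = 0 := by
      simp
    rw [h0, add_zero]
    refine Finset.sum_congr rfl (fun i hi => ?_)
    rw [Finset.mem_range] at hi
    rw [if_pos ⟨by omega, by omega⟩, Nat.add_sub_cancel]

lemma pow_delta_diffOp (b : ℕ → K) (l : ℕ) : ∀ k : ℕ,
    ∃ c : ℕ → K, δ ^ k * diffOp δ b l = diffOp δ c (l + k) ∧ c (l + k) = b l ∧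
      (1 ≤ l + k → c (l + k - 1) = (if 1 ≤ l then b (l - 1) else 0) + k • δ (b l)) := by
  intro k
  induction k with
  | zero =>
    refine ⟨b, by simp, rfl, fun hl => ?_⟩
    rw [if_pos (by omega)]
    simp
  | succ k ih =>
    obtain ⟨c, hc, hc1, hc2⟩ := ih
    refine ⟨shiftCoef δ c (l + k), ?_, ?_, ?_⟩
    · have : δ ^ (k + 1) * diffOp δ b l = δ * (δ ^ k * diffOp δ b l) := by
        rw [pow_succ', mul_assoc]
      rw [this, hc, delta_diffOp hLb]; rfl
    · show shiftCoef δ c (l + k) (l + (k+1)) = b l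
      unfold shiftCoef
      rw [if_neg (by omega), if_pos ⟨by omega, by omega⟩]
      have : l + (k + 1) - 1 = l + k := by omega
      rw [this, hc1, zero_add]
    · intro _
      show shiftCoef δ c (l + k) (l + (k+1) - 1) = _
      have e1 : l + (k + 1) - 1 = l + k := by omega
      rw [e1]
      unfold shiftCoef
      rw [if_pos (by omega)]
      by_cases hlk : 1 ≤ l + k
      · rw [if_pos ⟨by omega, by omega⟩, hc1, hc2 hlk, succ_nsmul]
        ring
      · have hl0 : l = 0 := by omega
        have hk0 : k = 0 := by omega
        subst hl0; subst hk0
        rw [if_neg (by omega)]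
        simp [hc1]

lemma prod_rep : ∀ (k : ℕ) (a b : ℕ → K) (l : ℕ),
    ∃ c : ℕ → K, diffOp δ a k * diffOp δ b l = diffOp δ c (k + l) ∧
      c (k + l) = a k * b l ∧
      (1 ≤ k + l → c (k + l - 1)
        = a k * ((if 1 ≤ l then b (l - 1) else 0) + k • δ (b l))
          + (if 1 ≤ k then a (k - 1) else 0) * b l) := by
  intro k
  induction k with
  | zero =>
    intro a b l
    refine ⟨fun j => a 0 * b j, ?_, by rw [Nat.zero_add], ?_⟩
    · rw [diffOp_zero_deg, mulOp_diffOp]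
      norm_num
    · intro hl
      show a 0 * b (0 + l - 1) = _
      rw [if_pos (by omega), if_neg (by omega), Nat.zero_add]
      simp
  | succ k ih =>
    intro a b l
    obtain ⟨c₁, hc₁, hc₁1, hc₁2⟩ := ih a b l
    obtain ⟨c₂, hc₂, hc₂1, hc₂2⟩ := pow_delta_diffOp hLb b l (k + 1)
    set cc : ℕ → K := fun j =>
      (if j ≤ k + l then c₁ j else 0) + a (k + 1) * c₂ j with hcc
    refine ⟨cc, ?_, ?_, ?_⟩
    · rw [diffOp_succ, add_mul, hc₁, mul_assoc, hc₂, mulOp_diffOp]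
      have e1 : diffOp δ c₁ (k + l) = diffOp δ (fun j => if j ≤ k + l then c₁ j else 0) (k + l) :=
        diffOp_congr δ (fun i hi => by rw [if_pos hi])
      have e2 : diffOp δ (fun j => if j ≤ k + l then c₁ j else 0) (k + l)
          = diffOp δ (fun j => if j ≤ k + l then c₁ j else 0) (l + (k + 1)) :=
        (diffOp_pad δ (by omega) (fun i h1 h2 => by rw [if_neg (by omega)])).symm
      rw [e1, e2, diffOp_add]
      have e3 : k + 1 + l = l + (k + 1) := by omega
      rw [e3]
    · show cc (k + 1 + l) = _
      rw [hcc]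
      simp only
      rw [if_neg (by omega)]
      have e4 : k + 1 + l = l + (k + 1) := by omega
      rw [e4, hc₂1, zero_add]
    · intro _
      show cc (k + 1 + l - 1) = _
      have e5 : k + 1 + l - 1 = k + l := by omega
      rw [hcc]
      simp only
      rw [e5, if_pos (le_refl _), hc₁1]
      have e6 : c₂ (k + l) = (if 1 ≤ l then b (l - 1) else 0) + (k+1) • δ (b l) := by
        have := hc₂2 (by omega)
        have e7 : l + (k + 1) - 1 = k + l := by omega
        rwa [e7] at this
      rw [e6, if_pos (by omega : 1 ≤ k + 1)]
      have e8 : k + 1 - 1 = k := by omega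
      rw [e8]
      ring

lemma comm_mulOp_rep (u : K) : ∀ (k : ℕ) (a : ℕ → K),
    ∃ e : ℕ → K, diffOp δ a (k + 1) * mulOp K u
        = mulOp K u * diffOp δ a (k + 1) + diffOp δ e k ∧
      e k = (k + 1) • (a (k + 1) * δ u) := by
  intro k
  induction k with
  | zero =>
    intro a
    refine ⟨fun _ => a 1 * δ u, ?_, by simp⟩
    have h1 : diffOp δ a 1 = mulOp K (a 0) + mulOp K (a 1) * δ := by
      rw [diffOp_succ, diffOp_zero_deg]
      norm_num
    have h2 : diffOp δ (fun _ : ℕ => a 1 * δ u) 0 = mulOp K (a 1 * δ u) :=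
      diffOp_zero_deg δ _
    rw [h1, h2]
    ext x
    simp only [Module.End.mul_apply, LinearMap.add_apply, mulOp_apply]
    rw [hLb u x]
    ring
  | succ k ih =>
    intro a
    obtain ⟨f, hf, hf1⟩ := ih (fun j => if j = k + 1 then 1 else 0)
    have hmono : diffOp δ (fun j => if j = k + 1 then (1:K) else 0) (k + 1) = δ ^ (k + 1) := by
      rw [← monomial_eq_diffOp]
      simp
    rw [hmono] at hf
    norm_num at hf1
    have hd2 : δ ^ (k + 2) * mulOp K u
        = mulOp K u * δ ^ (k + 2) + (mulOp K (δ u) * δ ^ (k + 1)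
          + δ * diffOp δ f k) := by
      have h3 : δ ^ (k + 2) * mulOp K u = δ * (δ ^ (k + 1) * mulOp K u) := by
        rw [pow_succ', mul_assoc]
      rw [h3, hf, mul_add, ← mul_assoc, delta_mulOp hLb, add_mul, mul_assoc,
        ← pow_succ']
      abel
    obtain ⟨e1, he1, he11⟩ := ih a
    refine ⟨fun j => (if j ≤ k then e1 j else 0)
        + a (k + 2) * (shiftCoef δ f k j + (if j = k + 1 then δ u else 0)), ?_, ?_⟩
    · have eE : diffOp δ (fun j => (if j ≤ k then e1 j else 0)
            + a (k + 2) * (shiftCoef δ f k j + (if j = k + 1 then δ u else 0))) (k + 1)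
          = diffOp δ e1 k
            + mulOp K (a (k + 2)) * (δ * diffOp δ f k + mulOp K (δ u) * δ ^ (k + 1)) := by
        rw [← diffOp_add]
        congr 1
        · rw [diffOp_pad δ (Nat.le_succ k) (fun i h1 h2 => by rw [if_neg (by omega)])]
          exact (diffOp_congr δ (fun i hi => by rw [if_pos hi])).symm
        · rw [delta_diffOp hLb, monomial_eq_diffOp, diffOp_add, mulOp_diffOp]
      rw [diffOp_succ δ a (k + 1), eE]
      rw [add_mul, he1, mul_assoc, hd2]
      rw [mul_add, mul_add, mul_add]
      have hcomm : mulOp K (a (k + 2)) * (mulOp K u * δ ^ (k + 2))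
          = mulOp K u * (mulOp K (a (k + 2)) * δ ^ (k + 2)) := by
        rw [← mul_assoc, ← mul_assoc, mulOp_mul, mulOp_mul, mul_comm u]
      rw [hcomm]
      noncomm_ring
    · show (if k + 1 ≤ k then e1 (k + 1) else 0)
          + a (k + 2) * (shiftCoef δ f k (k + 1) + (if k + 1 = k + 1 then δ u else 0))
          = _
      rw [if_neg (by omega), if_pos rfl, zero_add]
      have hs : shiftCoef δ f k (k + 1) = f k := by
        unfold shiftCoef
        rw [if_neg (by omega), if_pos ⟨by omega, by omega⟩, zero_add, Nat.add_sub_cancel]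
      rw [hs, hf1]
      simp only [nsmul_eq_mul]
      push_cast
      ring

lemma diffOp_coeffs_zero {u : K} (hu : δ u ≠ 0) :
    ∀ (k : ℕ) (a : ℕ → K), diffOp δ a k = 0 → ∀ i ≤ k, a i = 0 := by
  haveI : CharZero K := charZero_of_injective_algebraMap (algebraMap ℂ K).injective
  intro k
  induction k with
  | zero =>
    intro a h i hi
    interval_cases i
    have := congrArg (fun P : Module.End ℂ K => P 1) (diffOp_zero_deg δ a ▸ h)
    simpa using this
  | succ k ih =>
    intro a h i hi
    obtain ⟨e, he, he1⟩ := comm_mulOp_rep hLb u k a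
    rw [h, zero_mul, mul_zero, zero_add] at he
    have hek : e k = 0 := ih e he.symm k le_rfl
    have htop : a (k + 1) = 0 := by
      rw [hek, nsmul_eq_mul] at he1
      push_cast at he1
      have h2 : ((k : K) + 1) * (a (k + 1) * δ u) = 0 := he1.symm
      have h3 : ((k : K) + 1) ≠ 0 := Nat.cast_add_one_ne_zero k
      rcases mul_eq_zero.mp h2 with h4 | h4
      · exact absurd h4 h3
      · rcases mul_eq_zero.mp h4 with h5 | h5
        · exact h5
        · exact absurd h5 hu
    rcases Nat.lt_or_ge i (k + 1) with hik | hik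
    · have hlow : diffOp δ a k = 0 := by
        have := diffOp_pad δ (Nat.le_succ k)
          (fun j h1 h2 => by
            have : j = k + 1 := by omega
            rw [this, htop]) (a := a)
        rw [← this, h]
      exact ih a hlow i (by omega)
    · have : i = k + 1 := by omega
      rw [this, htop]

lemma diffOp_coeff_unique {u : K} (hu : δ u ≠ 0) {a b : ℕ → K} {k : ℕ}
    (h : diffOp δ a k = diffOp δ b k) : ∀ i ≤ k, a i = b i := by
  intro i hi
  have hsub : diffOp δ (fun j => a j + (- b j)) k = 0 := by
    rw [← diffOp_add, h]
    have : diffOp δ (fun j => - b j) k = - diffOp δ b k := by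
      unfold diffOp
      rw [← Finset.sum_neg_distrib]
      exact Finset.sum_congr rfl (fun j _ => by
        have : mulOp K (- b j) = - mulOp K (b j) := by ext x; simp
        rw [this]; exact neg_mul (α := Module.End ℂ K) _ _)
    rw [this]
    exact add_neg_cancel _
  have h0 := diffOp_coeffs_zero hLb hu k _ hsub i hi
  have h1 : a i - b i = 0 := by rw [sub_eq_add_neg]; exact h0
  exact sub_eq_zero.mp h1

lemma diffOp_ord_le {u : K} (hu : δ u ≠ 0) {a b : ℕ → K} {s t : ℕ}
    (h : diffOp δ a s = diffOp δ b t) (ha : a s ≠ 0) : s ≤ t := by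
  by_contra hst
  push_neg at hst
  set b' : ℕ → K := fun j => if j ≤ t then b j else 0 with hb'
  have h1 : diffOp δ b t = diffOp δ b' t := diffOp_congr δ (fun i hi => by
    rw [hb']; simp only; rw [if_pos hi])
  have h2 : diffOp δ b' s = diffOp δ b' t :=
    diffOp_pad δ (by omega) (fun i h1 h2 => by rw [hb']; simp only; rw [if_neg (by omega)])
  have h3 : diffOp δ a s = diffOp δ b' s := by rw [h, h1, ← h2]
  have := diffOp_coeff_unique hLb hu h3 s le_rfl
  rw [hb'] at this
  simp only at this
  rw [if_neg (by omega)] at this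
  exact ha this

omit hLb in
lemma diffOp_exact_rep : ∀ (k : ℕ) (a : ℕ → K), diffOp δ a k ≠ 0 →
    ∃ m ≤ k, diffOp δ a k = diffOp δ a m ∧ a m ≠ 0 := by
  intro k
  induction k with
  | zero =>
    intro a h
    refine ⟨0, le_rfl, rfl, ?_⟩
    intro h0
    apply h
    rw [diffOp_zero_deg, h0, mulOp_zero]
  | succ k ih =>
    intro a h
    by_cases htop : a (k + 1) = 0
    · have hpad : diffOp δ a (k + 1) = diffOp δ a k :=
        diffOp_pad δ (Nat.le_succ k) (fun i h1 h2 => by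
          have : i = k + 1 := by omega
          rw [this, htop])
      rw [hpad] at h ⊢
      obtain ⟨m, hm, hrep, hne⟩ := ih a h
      exact ⟨m, by omega, hrep, hne⟩
    · exact ⟨k + 1, le_rfl, rfl, htop⟩

omit hLb in
lemma diffOp_smul (γ : ℂ) (a : ℕ → K) (k : ℕ) :
    algebraMap ℂ (Module.End ℂ K) γ * diffOp δ a k
      = diffOp δ (fun j => algebraMap ℂ K γ * a j) k := by
  rw [algebraMap_end_eq, mulOp_diffOp]

lemma diffOp_pow (a : ℕ → K) (m : ℕ) : ∀ i : ℕ,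
    ∃ c : ℕ → K, (diffOp δ a m) ^ i = diffOp δ c (i * m) ∧ c (i * m) = (a m) ^ i := by
  intro i
  induction i with
  | zero =>
    refine ⟨fun _ => 1, ?_, by simp⟩
    have : diffOp δ (fun _ : ℕ => (1:K)) 0 = mulOp K 1 := diffOp_zero_deg δ _
    rw [pow_zero, Nat.zero_mul, this, mulOp_one]
  | succ i ih =>
    obtain ⟨c, hc, hc1⟩ := ih
    obtain ⟨d, hd, hd1, _⟩ := prod_rep hLb (i * m) c a m
    refine ⟨d, ?_, ?_⟩
    · have e1 : (i + 1) * m = i * m + m := by ring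
      rw [pow_succ, hc, e1, hd]
    · have e1 : (i + 1) * m = i * m + m := by ring
      rw [e1, hd1, hc1, pow_succ]

lemma delta_one : δ (1 : K) = 0 := by
  have h := hLb 1 1
  rw [mul_one, one_mul, mul_one] at h
  exact left_eq_add.mp h

lemma delta_pow (x : K) : ∀ j : ℕ, δ (x ^ (j + 1)) = ((j : K) + 1) * (x ^ j * δ x) := by
  intro j
  induction j with
  | zero => simp [pow_one]
  | succ j ih =>
    have : x ^ (j + 2) = x * x ^ (j + 1) := by ring
    rw [this, hLb, ih]
    push_cast
    ring

lemma delta_inv {x : K} (hx : x ≠ 0) : δ x⁻¹ = - (x⁻¹ * x⁻¹ * δ x) := by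
  have h0 : x * x⁻¹ = 1 := mul_inv_cancel₀ hx
  have h1 : δ (x * x⁻¹) = 0 := by rw [h0]; exact delta_one hLb
  rw [hLb] at h1
  have h2 : δ x⁻¹ = x⁻¹ * (x * δ x⁻¹) := by
    rw [← mul_assoc, inv_mul_cancel₀ hx, one_mul]
  rw [h2, eq_neg_of_add_eq_zero_left h1]
  ring

lemma const_ratio (hconst : ∀ a : K, δ a = 0 ↔ ∃ c : ℂ, a = algebraMap ℂ K c)
    {a ℓ : K} (ha : a ≠ 0) (hℓ : ℓ ≠ 0) {m n : ℕ} (hm : 1 ≤ m) (hn : 1 ≤ n)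
    (hrel : (m : K) * (a * δ ℓ) = (n : K) * (ℓ * δ a)) :
    ∃ γ : ℂ, γ ≠ 0 ∧ a ^ n = algebraMap ℂ K γ * ℓ ^ m := by
  obtain ⟨m', rfl⟩ : ∃ m', m = m' + 1 := ⟨m - 1, by omega⟩
  obtain ⟨n', rfl⟩ : ∃ n', n = n' + 1 := ⟨n - 1, by omega⟩
  have hℓm : ℓ ^ (m' + 1) ≠ 0 := pow_ne_zero _ hℓ
  have hinv : ℓ ^ (m' + 1) * (ℓ ^ (m' + 1))⁻¹ = 1 := mul_inv_cancel₀ hℓm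
  have hw : δ (a ^ (n' + 1) * (ℓ ^ (m' + 1))⁻¹) = 0 := by
    rw [hLb, delta_inv hLb hℓm, delta_pow hLb, delta_pow hLb]
    push_cast at hrel
    linear_combination (-(a ^ n' * (ℓ ^ (m' + 1))⁻¹ * (ℓ ^ (m' + 1))⁻¹ * ℓ ^ m')) * hrel
      - (((n' : K) + 1) * a ^ n' * δ a * (ℓ ^ (m' + 1))⁻¹) * hinv
  obtain ⟨γ, hγ⟩ := (hconst _).mp hw
  refine ⟨γ, ?_, ?_⟩
  · intro h0
    rw [h0, map_zero] at hγ
    rcases mul_eq_zero.mp hγ with h | h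
    · exact pow_ne_zero _ ha h
    · exact hℓm (inv_eq_zero.mp h)
  · have h5 : a ^ (n' + 1) * (ℓ ^ (m' + 1))⁻¹ * ℓ ^ (m' + 1) = a ^ (n' + 1) := by
      field_simp
    rw [← h5, hγ]

lemma lead_relation {u : K} (hu : δ u ≠ 0) {a b : ℕ → K} {m n : ℕ}
    (hm : 1 ≤ m) (hn : 1 ≤ n)
    (hcomm : diffOp δ a m * diffOp δ b n = diffOp δ b n * diffOp δ a m) :
    (m : K) * (a m * δ (b n)) = (n : K) * (b n * δ (a m)) := by
  obtain ⟨c, hc, hc1, hc2⟩ := prod_rep hLb m a b n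
  obtain ⟨d, hd, hd1, hd2⟩ := prod_rep hLb n b a m
  have hmn : n + m = m + n := by omega
  have heq : diffOp δ c (m + n) = diffOp δ d (m + n) := by
    rw [← hc, hcomm, hd, hmn]
  have hco := diffOp_coeff_unique hLb hu heq (m + n - 1) (by omega)
  rw [hc2 (by omega)] at hco
  have hd2' := hd2 (by omega)
  have e1 : n + m - 1 = m + n - 1 := by omega
  rw [e1] at hd2'
  rw [hd2'] at hco
  simp only [if_pos hn, if_pos hm, nsmul_eq_mul] at hco
  linear_combination hco

lemma order_zero_central {u : K} (hu : δ u ≠ 0) {a b : ℕ → K} {n : ℕ}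
    (hn : 1 ≤ n) (hbn : b n ≠ 0)
    (hcomm : diffOp δ a 0 * diffOp δ b n = diffOp δ b n * diffOp δ a 0) :
    δ (a 0) = 0 := by
  haveI : CharZero K := charZero_of_injective_algebraMap (algebraMap ℂ K).injective
  obtain ⟨c, hc, hc1, hc2⟩ := prod_rep hLb 0 a b n
  obtain ⟨d, hd, hd1, hd2⟩ := prod_rep hLb n b a 0
  have heq : diffOp δ c (0 + n) = diffOp δ d (0 + n) := by
    rw [← hc, hcomm, hd]
    congr 1
    omega
  have hco := diffOp_coeff_unique hLb hu heq (0 + n - 1) (by omega)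
  rw [hc2 (by omega)] at hco
  have hd2' := hd2 (by omega)
  have e1 : n + 0 - 1 = 0 + n - 1 := by omega
  rw [e1] at hd2'
  rw [hd2'] at hco
  simp only [if_pos hn, if_neg (by omega : ¬ (1 ≤ 0)), nsmul_eq_mul] at hco
  have h2 : (n : K) * (b n * δ (a 0)) = 0 := by linear_combination -hco
  have h3 : (n : K) ≠ 0 := Nat.cast_ne_zero.mpr (by omega)
  rcases mul_eq_zero.mp h2 with h | h
  · exact absurd h h3
  · rcases mul_eq_zero.mp h with h' | h'
    · exact absurd h' hbn
    · exact h' 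

lemma telescope {x g : ℕ → K} {m d : ℕ} {X B : Module.End ℂ K}
    (hX : X = diffOp δ x m) (hD : X * B - B * X = diffOp δ g d) :
    ∀ i : ℕ, ∃ C : ℕ → K, X ^ (i + 1) * B - B * X ^ (i + 1) = diffOp δ C (i * m + d) ∧
      C (i * m + d) = ((i : K) + 1) * ((x m) ^ i * g d) := by
  intro i
  induction i with
  | zero =>
    refine ⟨g, ?_, by push_cast; ring⟩
    rw [pow_one, hD]
    congr 1
    omega
  | succ i ih =>
    obtain ⟨C, hC, hC1⟩ := ih
    have hid : X ^ (i + 2) * B - B * X ^ (i + 2)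
        = X * (X ^ (i + 1) * B - B * X ^ (i + 1)) + (X * B - B * X) * X ^ (i + 1) := by
      have e : X ^ (i + 2) = X * X ^ (i + 1) := by rw [← pow_succ']
      rw [e]
      simp only [mul_sub, sub_mul, mul_assoc]
      abel
    obtain ⟨c₁, hc₁, hc₁1, _⟩ := prod_rep hLb m x C (i * m + d)
    obtain ⟨pw, hpw, hpw1⟩ := diffOp_pow hLb x m (i + 1)
    obtain ⟨c₂, hc₂, hc₂1, _⟩ := prod_rep hLb d g pw ((i + 1) * m)
    have e1 : m + (i * m + d) = (i + 1) * m + d := by ring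
    have e2 : d + (i + 1) * m = (i + 1) * m + d := by ring
    refine ⟨fun j => c₁ j + c₂ j, ?_, ?_⟩
    · rw [hid, hC, hD, hX, hc₁, hpw, hc₂, e1, e2, diffOp_add]
    · have h1 : c₁ ((i + 1) * m + d) = x m * C (i * m + d) := by rw [← e1, hc₁1]
      have h2 : c₂ ((i + 1) * m + d) = g d * (x m) ^ (i + 1) := by
        rw [← e2, hc₂1, hpw1]
      show c₁ ((i + 1) * m + d) + c₂ ((i + 1) * m + d) = _
      rw [h1, h2, hC1]
      push_cast
      ring

lemma descent {u : K} (hu : δ u ≠ 0)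
    (hconst : ∀ a : K, δ a = 0 ↔ ∃ c : ℂ, a = algebraMap ℂ K c)
    {b : ℕ → K} {n : ℕ} (hn : 1 ≤ n) (hbn : b n ≠ 0)
    {B : Module.End ℂ K} {β : ℕ → K} {p : ℕ} (hB : B = diffOp δ β p)
    (hBL : B * diffOp δ b n = diffOp δ b n * B) :
    ∀ j : ℕ, ∀ (X : Module.End ℂ K) (x : ℕ → K) (m : ℕ),
      X = diffOp δ x m → x m ≠ 0 → X * diffOp δ b n = diffOp δ b n * X →
      ∀ (g : ℕ → K) (d : ℕ), X * B - B * X = diffOp δ g d → g d ≠ 0 →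
      d + j ≤ m + p := by
  haveI : CharZero K := charZero_of_injective_algebraMap (algebraMap ℂ K).injective
  intro j
  induction j with
  | zero =>
    intro X x m hX hx hXL g d hD hg
    obtain ⟨c, hc, _, _⟩ := prod_rep hLb m x β p
    obtain ⟨c', hc', _, _⟩ := prod_rep hLb p β x m
    have e1 : p + m = m + p := by omega
    have hsub : X * B - B * X = diffOp δ (fun j => c j - c' j) (m + p) := by
      rw [hX, hB, hc, hc', e1, diffOp_sub]
    rw [hD] at hsub
    have := diffOp_ord_le hLb hu hsub hg
    omega
  | succ j ih =>
    intro X x m hX hx hXL g d hD hg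
    -- m ≥ 1
    have hDne : diffOp δ g d ≠ 0 := by
      intro h0
      exact hg (diffOp_coeffs_zero hLb hu d g h0 d le_rfl)
    have hm : 1 ≤ m := by
      by_contra hm0
      push_neg at hm0
      interval_cases m
      · have hδ : δ (x 0) = 0 := by
          apply order_zero_central hLb hu hn hbn
          rw [← hX]
          exact hXL
        obtain ⟨γ, hγ⟩ := (hconst _).mp hδ
        have hXc : X = algebraMap ℂ (Module.End ℂ K) γ := by
          rw [hX, diffOp_zero_deg, hγ, algebraMap_end_eq]
        have : X * B - B * X = 0 := by
          rw [hXc, Algebra.commutes γ B, sub_self]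
        rw [hD] at this
        exact hDne this
    -- leading coefficient relation
    have hcommrep : diffOp δ x m * diffOp δ b n = diffOp δ b n * diffOp δ x m := by
      rw [← hX]; exact hXL
    have hrel := lead_relation hLb hu hm hn hcommrep
    obtain ⟨γ, hγne, hγ⟩ := const_ratio hLb hconst hx hbn hm hn hrel
    set L := diffOp δ b n with hLdef
    set S := algebraMap ℂ (Module.End ℂ K) γ * L ^ m with hSdef
    set X' := X ^ n - S with hX'def
    -- representation of X'
    obtain ⟨c, hcX, hcX1⟩ := diffOp_pow hLb x m n
    obtain ⟨q, hqL, hqL1⟩ := diffOp_pow hLb b n m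
    have hSrep : S = diffOp δ (fun j => algebraMap ℂ K γ * q j) (n * m) := by
      rw [hSdef, hLdef, hqL, diffOp_smul, Nat.mul_comm m n]
    have hX'rep : X' = diffOp δ (fun j => c j - algebraMap ℂ K γ * q j) (n * m) := by
      rw [hX'def, hX, hcX, hSrep]
      exact diffOp_sub δ c _ (n * m)
    have htop0 : c (n * m) - algebraMap ℂ K γ * q (n * m) = 0 := by
      rw [hcX1]
      have : q (n * m) = (b n) ^ m := by rw [Nat.mul_comm n m, hqL1]
      rw [this, hγ, sub_self]
    have hX'rep' : X' = diffOp δ (fun j => c j - algebraMap ℂ K γ * q j) (n * m - 1) := by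
      rw [hX'rep]
      exact diffOp_pad δ (Nat.sub_le _ _) (fun i h1 h2 => by
        have hi : i = n * m := by omega
        rw [hi]; exact htop0)
    -- commutation facts
    have hCommBL : Commute B L := hBL
    have hCommBS : Commute B S := by
      have h1 : Commute B (algebraMap ℂ (Module.End ℂ K) γ) :=
        (Algebra.commutes γ B).symm
      exact h1.mul_right (hCommBL.pow_right m)
    have hD' : X' * B - B * X' = X ^ n * B - B * X ^ n := by
      rw [hX'def, sub_mul, mul_sub, hCommBS.eq]
      abel
    -- telescope
    obtain ⟨n'', rfl⟩ : ∃ n'', n = n'' + 1 := ⟨n - 1, by omega⟩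
    obtain ⟨C, hC, hC1⟩ := telescope hLb hX hD n''
    have hCtop : C (n'' * m + d) ≠ 0 := by
      rw [hC1]
      exact mul_ne_zero (Nat.cast_add_one_ne_zero n'') (mul_ne_zero (pow_ne_zero _ hx) hg)
    have hD'rep : X' * B - B * X' = diffOp δ C (n'' * m + d) := by rw [hD', hC]
    -- X' nonzero
    have hX'ne : X' ≠ 0 := by
      intro h0
      rw [h0, zero_mul, mul_zero, sub_self] at hD'rep
      exact hCtop (diffOp_coeffs_zero hLb hu _ C hD'rep.symm _ le_rfl)
    have hX'ne' : diffOp δ (fun j => c j - algebraMap ℂ K γ * q j) ((n'' + 1) * m - 1) ≠ 0 := by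
      rw [← hX'rep']
      exact hX'ne
    obtain ⟨m', hm'le, hm'rep, hm'ne⟩ := diffOp_exact_rep _ _ hX'ne'
    -- X' commutes with L
    have hCommXL : Commute X L := hXL
    have hCommX'L : Commute X' L := by
      have h1 : Commute (algebraMap ℂ (Module.End ℂ K) γ) L := Algebra.commutes γ L
      have h2 : Commute (L ^ m) L := (Commute.refl L).pow_left m
      exact (hCommXL.pow_left _).sub_left (h1.mul_left h2)
    have := ih X' _ m' (hX'rep'.trans hm'rep) hm'ne hCommX'L.eq C (n'' * m + d) hD'rep hCtop
    -- conclude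
    have hle : m' ≤ (n'' + 1) * m - 1 := hm'le
    have e3 : (n'' + 1) * m = n'' * m + m := by ring
    omega

lemma centralizer_comm {u : K} (hu : δ u ≠ 0)
    (hconst : ∀ a : K, δ a = 0 ↔ ∃ c : ℂ, a = algebraMap ℂ K c)
    {b : ℕ → K} {n : ℕ} (hn : 1 ≤ n) (hbn : b n ≠ 0)
    {A B : Module.End ℂ K} (hA : IsDiffOp δ A) (hB : IsDiffOp δ B)
    (hAL : A * diffOp δ b n = diffOp δ b n * A)
    (hBL : B * diffOp δ b n = diffOp δ b n * B) :
    A * B = B * A := by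
  by_contra hne
  have hDne : A * B - B * A ≠ 0 := sub_ne_zero_of_ne hne
  have hAne : A ≠ 0 := by
    intro h0
    rw [h0, zero_mul, mul_zero, sub_self] at hDne
    exact hDne rfl
  obtain ⟨a0, k0, hArep0⟩ := hA
  obtain ⟨β, p, hBrep⟩ := hB
  have hArep0' : diffOp δ a0 k0 ≠ 0 := by rw [← hArep0]; exact hAne
  obtain ⟨m, hmle, hrepm, ham⟩ := diffOp_exact_rep _ _ hArep0'
  have hArep : A = diffOp δ a0 m := by rw [hArep0, hrepm]
  obtain ⟨c, hc, _, _⟩ := prod_rep hLb m a0 β p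
  obtain ⟨c', hc', _, _⟩ := prod_rep hLb p β a0 m
  have e1 : p + m = m + p := by omega
  have hDrep0 : A * B - B * A = diffOp δ (fun j => c j - c' j) (m + p) := by
    rw [hArep, hBrep, hc, hc', e1, diffOp_sub]
  have hDrep0' : diffOp δ (fun j => c j - c' j) (m + p) ≠ 0 := by
    rw [← hDrep0]; exact hDne
  obtain ⟨d, hdle, hrepd, hgd⟩ := diffOp_exact_rep _ _ hDrep0'
  have hDrep : A * B - B * A = diffOp δ (fun j => c j - c' j) d := by
    rw [hDrep0, hrepd]
  have := descent hLb hu hconst hn hbn hBrep hBL (m + p + 1) A a0 m hArep ham hAL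
      _ d hDrep hgd
  omega

end Leib

section Final
variable {K : Type*} [Field K] [Algebra ℂ K]
variable {δ : Module.End ℂ K}

/-- degenerate case : δ = 0 -/
lemma deg_mul_right (hconst : ∀ a : K, δ a = 0 ↔ ∃ c : ℂ, a = algebraMap ℂ K c)
    (h0 : ∀ a : K, δ a = 0) (M : Module.End ℂ K) (x : K) : M x = x * M 1 := by
  obtain ⟨γ, hγ⟩ := (hconst x).mp (h0 x)
  rw [hγ, Algebra.algebraMap_eq_smul_one, map_smul, smul_mul_assoc, one_mul]

lemma deg_comm (hconst : ∀ a : K, δ a = 0 ↔ ∃ c : ℂ, a = algebraMap ℂ K c)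
    (h0 : ∀ a : K, δ a = 0) (M N : Module.End ℂ K) : M * N = N * M := by
  ext x
  show M (N x) = N (M x)
  rw [deg_mul_right hconst h0 M (N x), deg_mul_right hconst h0 N x,
    deg_mul_right hconst h0 N (M x), deg_mul_right hconst h0 M x]
  ring

lemma deg_isDiffOp (hconst : ∀ a : K, δ a = 0 ↔ ∃ c : ℂ, a = algebraMap ℂ K c)
    (h0 : ∀ a : K, δ a = 0) (M : Module.End ℂ K) : IsDiffOp δ M := by
  refine ⟨fun _ => M 1, 0, ?_⟩
  rw [diffOp_zero_deg]
  ext x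
  rw [mulOp_apply, deg_mul_right hconst h0 M x, mul_comm]

lemma isDiffOp_pad {a : ℕ → K} {k N : ℕ} (hk : k ≤ N) :
    diffOp δ a k = diffOp δ (fun j => if j ≤ k then a j else 0) N := by
  have h1 : diffOp δ a k = diffOp δ (fun j => if j ≤ k then a j else 0) k :=
    diffOp_congr δ (fun i hi => by rw [if_pos hi])
  have h2 : diffOp δ (fun j => if j ≤ k then a j else 0) N
      = diffOp δ (fun j => if j ≤ k then a j else 0) k :=
    diffOp_pad δ hk (fun i hi1 hi2 => by rw [if_neg (by omega)])
  rw [h1, ← h2]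

lemma isDiffOp_add {P Q : Module.End ℂ K} (hP : IsDiffOp δ P) (hQ : IsDiffOp δ Q) :
    IsDiffOp δ (P + Q) := by
  obtain ⟨a, k, rfl⟩ := hP
  obtain ⟨b, l, rfl⟩ := hQ
  refine ⟨fun j => (if j ≤ k then a j else 0) + (if j ≤ l then b j else 0), max k l, ?_⟩
  rw [isDiffOp_pad (le_max_left k l), isDiffOp_pad (δ := δ) (a := b) (le_max_right k l),
    diffOp_add]

lemma isDiffOp_mul (hLb : ∀ a b : K, δ (a * b) = a * δ b + δ a * b)
    {P Q : Module.End ℂ K} (hP : IsDiffOp δ P) (hQ : IsDiffOp δ Q) :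
    IsDiffOp δ (P * Q) := by
  obtain ⟨a, k, rfl⟩ := hP
  obtain ⟨b, l, rfl⟩ := hQ
  obtain ⟨c, hc, _, _⟩ := prod_rep hLb k a b l
  exact ⟨c, k + l, hc⟩

lemma isDiffOp_one : IsDiffOp δ (1 : Module.End ℂ K) :=
  ⟨fun _ => 1, 0, by rw [diffOp_zero_deg, mulOp_one]⟩

lemma isDiffOp_zero : IsDiffOp δ (0 : Module.End ℂ K) :=
  ⟨fun _ => 0, 0, by rw [diffOp_zero_deg, mulOp_zero]⟩

lemma isDiffOp_algebraMap (γ : ℂ) : IsDiffOp δ (algebraMap ℂ (Module.End ℂ K) γ) :=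
  ⟨fun _ => algebraMap ℂ K γ, 0, by rw [diffOp_zero_deg, algebraMap_end_eq]⟩

lemma part1 (hLb : ∀ a b : K, δ (a * b) = a * δ b + δ a * b)
    (hconst : ∀ a : K, δ a = 0 ↔ ∃ c : ℂ, a = algebraMap ℂ K c) :
    ∀ L A B : Module.End ℂ K, HasPosOrd δ L →
      IsDiffOp δ A → IsDiffOp δ B →
      A * L = L * A → B * L = L * B → A * B = B * A := by
  intro L A B hL hA hB hAL hBL
  by_cases hu : ∃ u : K, δ u ≠ 0
  · obtain ⟨u, hu⟩ := hu
    obtain ⟨b, n, hn, hbn, hLrep⟩ := hL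
    subst hLrep
    exact centralizer_comm hLb hu hconst hn hbn hA hB hAL hBL
  · push_neg at hu
    exact deg_comm hconst hu A B

theorem statement2aux (δ : Module.End ℂ K)
    (hLeibniz : ∀ a b : K, δ (a * b) = a * δ b + δ a * b)
    (hconst : ∀ a : K, δ a = 0 ↔ ∃ c : ℂ, a = algebraMap ℂ K c) :
    (∀ L A B : Module.End ℂ K, HasPosOrd δ L →
      IsDiffOp δ A → IsDiffOp δ B →
      A * L = L * A → B * L = L * B → A * B = B * A) ∧
    (∀ 𝒜 : Subalgebra ℂ (Module.End ℂ K),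
      ((𝒜 : Set (Module.End ℂ K)) ⊆ {P | IsDiffOp δ P}) →
      (∀ x ∈ 𝒜, ∀ y ∈ 𝒜, x * y = y * x) →
      (∀ 𝒜' : Subalgebra ℂ (Module.End ℂ K),
        ((𝒜' : Set (Module.End ℂ K)) ⊆ {P | IsDiffOp δ P}) →
        (∀ x ∈ 𝒜', ∀ y ∈ 𝒜', x * y = y * x) → 𝒜 ≤ 𝒜' → 𝒜' = 𝒜) →
      ∀ L ∈ 𝒜, HasPosOrd δ L →
        (𝒜 : Set (Module.End ℂ K)) = {M | IsDiffOp δ M ∧ M * L = L * M}) := by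
  constructor
  · exact part1 hLeibniz hconst
  · intro 𝒜 hsub hcomm hmax L hL𝒜 hpos
    by_cases hu : ∃ u : K, δ u ≠ 0
    · -- main case : centralizer is a commutative subalgebra
      set 𝒜' : Subalgebra ℂ (Module.End ℂ K) :=
        { carrier := {M | IsDiffOp δ M ∧ M * L = L * M}
          mul_mem' := fun {P Q} hP hQ => ⟨isDiffOp_mul hLeibniz hP.1 hQ.1, by
            rw [mul_assoc, hQ.2, ← mul_assoc, hP.2, mul_assoc]⟩
          one_mem' := ⟨isDiffOp_one, by rw [one_mul, mul_one]⟩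
          add_mem' := fun {P Q} hP hQ => ⟨isDiffOp_add hP.1 hQ.1, by
            rw [add_mul, mul_add, hP.2, hQ.2]⟩
          zero_mem' := ⟨isDiffOp_zero, by rw [zero_mul, mul_zero]⟩
          algebraMap_mem' := fun γ => ⟨isDiffOp_algebraMap γ, by
            rw [Algebra.commutes]⟩ } with h𝒜'
      have hsub' : (𝒜' : Set (Module.End ℂ K)) ⊆ {P | IsDiffOp δ P} :=
        fun x hx => hx.1
      have hcomm' : ∀ x ∈ 𝒜', ∀ y ∈ 𝒜', x * y = y * x := by
        intro x hx y hy
        exact part1 hLeibniz hconst L x y hpos hx.1 hy.1 hx.2 hy.2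
      have hle : 𝒜 ≤ 𝒜' := by
        intro x hx
        exact ⟨hsub hx, hcomm x hx L hL𝒜⟩
      have heq := hmax 𝒜' hsub' hcomm' hle
      rw [← heq]
      rfl
    · -- degenerate case
      push_neg at hu
      have htop : (⊤ : Subalgebra ℂ (Module.End ℂ K)) = 𝒜 := by
        refine hmax ⊤ (fun P _ => deg_isDiffOp hconst hu P)
          (fun x _ y _ => deg_comm hconst hu x y) le_top
      ext M
      constructor
      · intro hM
        exact ⟨hsub hM, hcomm M hM L hL𝒜⟩
      · intro _
        have : M ∈ (⊤ : Subalgebra ℂ (Module.End ℂ K)) := trivial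
        rw [htop] at this
        exact this

end Final


/-- If `L ∈ 𝒟` has positive order and `A, B ∈ 𝒟` both commute with `L`,
then `[A,B] = 0`; in particular the centralizer `𝒞(L)` is commutative, and every maximal
commutative subalgebra of `𝒟` is the centralizer (in `𝒟`) of each of its elements of
positive order. -/
theorem statement2 {K : Type*} [Field K] [Algebra ℂ K]
    (δ : Module.End ℂ K)
    (hLeibniz : ∀ a b : K, δ (a * b) = a * δ b + δ a * b)
    (hconst : ∀ a : K, δ a = 0 ↔ ∃ c : ℂ, a = algebraMap ℂ K c) :
    (∀ L A B : Module.End ℂ K, HasPosOrd δ L →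
      IsDiffOp δ A → IsDiffOp δ B →
      A * L = L * A → B * L = L * B → A * B = B * A) ∧
    (∀ 𝒜 : Subalgebra ℂ (Module.End ℂ K),
      ((𝒜 : Set (Module.End ℂ K)) ⊆ {P | IsDiffOp δ P}) →
      (∀ x ∈ 𝒜, ∀ y ∈ 𝒜, x * y = y * x) →
      (∀ 𝒜' : Subalgebra ℂ (Module.End ℂ K),
        ((𝒜' : Set (Module.End ℂ K)) ⊆ {P | IsDiffOp δ P}) →
        (∀ x ∈ 𝒜', ∀ y ∈ 𝒜', x * y = y * x) → 𝒜 ≤ 𝒜' → 𝒜' = 𝒜) →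
      ∀ L ∈ 𝒜, HasPosOrd δ L →
        (𝒜 : Set (Module.End ℂ K)) = {M | IsDiffOp δ M ∧ M * L = L * M}) := by
  exact statement2aux δ hLeibniz hconst
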